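/- Let w ∈ W be a basic involution, and let Z_B, Z_U, Z_T denote the stabilizers of f_w under the coadjoint action in B, U, T respectively. Then the multiplication map Z_U × Z_T → Z_B, (u,h) ↦ uh, is well defined and bijective. -/

import Mathlib

/-!
The Weyl group of type `Dₙ`, realized as the group of permutations `w` of `ℤ`
supported on `{±1, …, ±n}` with `w (-i) = - w i` and an even number of sign changes.
-/

open Equiv

/-- The simple reflections of type `Dₙ`, indexed by `i ∈ {1, …, n}`:
`sᵢ = (i, i+1)(-i, -(i+1))` for `1 ≤ i ≤ n - 1`, and
`sₙ = (n-1, -n)(-(n-1), n)`. -/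
def simpleRefl (n : ℕ) (i : ℕ) : Equiv.Perm ℤ :=
  if i < n then Equiv.swap (i : ℤ) ((i : ℤ) + 1) * Equiv.swap (-(i : ℤ)) (-((i : ℤ) + 1))
  else Equiv.swap ((n : ℤ) - 1) (-(n : ℤ)) * Equiv.swap (-((n : ℤ) - 1)) (n : ℤ)

/-- A word in the letters `{1, …, n}` (indices of simple reflections). -/
def IsWord (n : ℕ) (L : List ℕ) : Prop := ∀ i ∈ L, 1 ≤ i ∧ i ≤ n

/-- The product `s_{i₁} ⋯ s_{i_l}` of the word `L = [i₁, …, i_l]`. -/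
def wordProd (n : ℕ) (L : List ℕ) : Equiv.Perm ℤ := (L.map (simpleRefl n)).prod

/-- Membership in the Weyl group `W` of type `Dₙ`: a permutation of `ℤ` commuting with
negation, fixing every integer of absolute value `> n`, and with an even number of
`i ∈ {1, …, n}` such that `w i < 0`. -/
def IsD (n : ℕ) (w : Equiv.Perm ℤ) : Prop :=
  (∀ i : ℤ, w (-i) = -(w i)) ∧ (∀ i : ℤ, (n : ℤ) < |i| → w i = i) ∧
    Even (((Finset.Icc (1 : ℤ) (n : ℤ)).filter fun i => w i < 0).card)

/-- The length `ℓ(w)`: the minimal number of factors in an expression of `w` as a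
product of simple reflections. -/
noncomputable def weylLength (n : ℕ) (w : Equiv.Perm ℤ) : ℕ :=
  sInf {l | ∃ L : List ℕ, IsWord n L ∧ L.length = l ∧ wordProd n L = w}

/-- `L` is a reduced decomposition of `w`. -/
def IsReducedWord (n : ℕ) (w : Equiv.Perm ℤ) (L : List ℕ) : Prop :=
  IsWord n L ∧ wordProd n L = w ∧ L.length = weylLength n w

/-- `w` is a basic involution: `w ∈ W`, `w² = id`, and `w i ≠ -i` for all `i ∈ {1, …, n}`. -/
def IsBasicInvolution (n : ℕ) (w : Equiv.Perm ℤ) : Prop :=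
  IsD n w ∧ w * w = 1 ∧ ∀ i : ℤ, 1 ≤ i → i ≤ (n : ℤ) → w i ≠ -i

/-!
The group `SO₂ₙ(ℂ)`, its subgroups `B`, `U`, `T`, and the coadjoint action on `𝔫*`.
Rows and columns of `2n × 2n` matrices are indexed by `1, …, n, -n, …, -1`; the index
`i > 0` labels row `i - 1` (0-based) and the index `-j` labels row `2n - j` (0-based).
-/

/-- `2n × 2n` complex matrices. -/
abbrev Mat (n : ℕ) : Type := Matrix (Fin (2 * n)) (Fin (2 * n)) ℂ

/-- The matrix `J` with `1`'s on the antidiagonal and `0`'s elsewhere. -/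
def antidiagJ (n : ℕ) : Mat n :=
  Matrix.of fun i j => if (i : ℕ) + (j : ℕ) = 2 * n - 1 then 1 else 0

/-- The strictly lower-triangular part of a matrix. -/
def lowPart (n : ℕ) (M : Mat n) : Mat n :=
  Matrix.of fun i j => if (j : ℕ) < (i : ℕ) then M i j else 0

/-- Membership in `SO₂ₙ(ℂ) = {g ∈ SL₂ₙ(ℂ) : gᵀ J g = J}`. -/
def IsSO (n : ℕ) (g : Mat n) : Prop :=
  g.det = 1 ∧ g.transpose * antidiagJ n * g = antidiagJ n

/-- The Borel subgroup `B`: upper-triangular matrices in `SO₂ₙ(ℂ)`. -/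
def Bset (n : ℕ) : Set (Mat n) :=
  {g | IsSO n g ∧ ∀ i j : Fin (2 * n), (j : ℕ) < (i : ℕ) → g i j = 0}

/-- The unipotent radical `U`: upper-triangular matrices in `SO₂ₙ(ℂ)` with `1`'s on
the diagonal. -/
def Uset (n : ℕ) : Set (Mat n) := {g | g ∈ Bset n ∧ ∀ i, g i i = 1}

/-- The maximal torus `T`: diagonal matrices in `SO₂ₙ(ℂ)`. -/
def Tset (n : ℕ) : Set (Mat n) := {g | IsSO n g ∧ ∀ i j, i ≠ j → g i j = 0}

/-- The coadjoint action `b.λ = (b λ b⁻¹)_low`. -/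
noncomputable def coad (n : ℕ) (b lam : Mat n) : Mat n := lowPart n (b * lam * b⁻¹)

/-- The support of an involution `w`, encoded as triples: `(i, j, false)` stands for the
root `ε_{i+1} - ε_{j+1}` (so `w (i+1) = j+1`), `(i, j, true)` for `ε_{i+1} + ε_{j+1}`
(so `w (i+1) = -(j+1)`); here `i < j` as elements of `Fin n` (0-based indexing). -/
def suppFinset (n : ℕ) (w : Equiv.Perm ℤ) : Finset (Fin n × Fin n × Bool) :=
  Finset.univ.filter fun r =>
    r.1 < r.2.1 ∧
      ((r.2.2 = false ∧ w (((r.1 : ℕ) : ℤ) + 1) = ((r.2.1 : ℕ) : ℤ) + 1) ∨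
       (r.2.2 = true ∧ w (((r.1 : ℕ) : ℤ) + 1) = -(((r.2.1 : ℕ) : ℤ) + 1)))

/-- The basis vector `e_β*` of `𝔫*`: for `β = ε_i - ε_j` (1-based `i < j`),
`e_β* = E_{j,i} - E_{-i,-j}`; for `β = ε_i + ε_j`, `e_β* = E_{-j,i} - E_{-i,j}`. -/
def eStar (n : ℕ) (r : Fin n × Fin n × Bool) : Mat n :=
  if r.2.2 then
    Matrix.single ⟨2 * n - 1 - (r.2.1 : ℕ), by have := r.2.1.isLt; omega⟩
        ⟨(r.1 : ℕ), by have := r.1.isLt; omega⟩ 1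
      - Matrix.single ⟨2 * n - 1 - (r.1 : ℕ), by have := r.1.isLt; omega⟩
        ⟨(r.2.1 : ℕ), by have := r.2.1.isLt; omega⟩ 1
  else
    Matrix.single ⟨(r.2.1 : ℕ), by have := r.2.1.isLt; omega⟩
        ⟨(r.1 : ℕ), by have := r.1.isLt; omega⟩ 1
      - Matrix.single ⟨2 * n - 1 - (r.1 : ℕ), by have := r.1.isLt; omega⟩
        ⟨2 * n - 1 - (r.2.1 : ℕ), by have := r.2.1.isLt; omega⟩ 1

/-- The linear form `f_{w,ξ} = ∑_{β ∈ Supp(w)} ξ(β) e_β*`. -/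
noncomputable def fwxi (n : ℕ) (w : Equiv.Perm ℤ) (xi : Fin n × Fin n × Bool → ℂˣ) : Mat n :=
  ∑ r ∈ suppFinset n w, ((xi r : ℂ) • eStar n r)

/-- The linear form `f_w = ∑_{β ∈ Supp(w)} e_β*`. -/
noncomputable def fw (n : ℕ) (w : Equiv.Perm ℤ) : Mat n := ∑ r ∈ suppFinset n w, eStar n r

/-- The coadjoint `B`-orbit `Ω_w` of `f_w`. -/
def OmegaSet (n : ℕ) (w : Equiv.Perm ℤ) : Set (Mat n) :=
  {m | ∃ b ∈ Bset n, m = coad n b (fw n w)}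

/-- The coadjoint `U`-orbit `Θ_{w,ξ}` of `f_{w,ξ}`. -/
def ThetaSet (n : ℕ) (w : Equiv.Perm ℤ) (xi : Fin n × Fin n × Bool → ℂˣ) : Set (Mat n) :=
  {m | ∃ u ∈ Uset n, m = coad n u (fwxi n w xi)}

/-!
Every `b ∈ B` factors as `b = u t` with `t = diag(b) ∈ T` and `u = b t⁻¹ ∈ U`, uniquely, since
`diag(u t) = t`. So it suffices that `t` (and then `u`) fixes `f_w` whenever `b` does. As `w` is an
involution commuting with `-`, a nonzero entry of `f_w` at `(p, q)` has signed labels related by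
`p = w(q)`, so each row and each column of `f_w` carries at most one nonzero entry. Since `f_w` is
strictly lower triangular, `b.f_w = f_w` says that `b f_w` and `f_w b` agree below the diagonal; at a
nonzero entry `(p, q)` of `f_w` this reads `b_pp = b_qq`, which is exactly what the diagonal matrix
`t` needs in order to fix `f_w`.
-/

open Matrix

section

variable {n : ℕ}

lemma lowPart_apply (M : Mat n) (i j : Fin (2 * n)) :
    lowPart n M i j = if j < i then M i j else 0 := rfl

lemma lowPart_add (M N : Mat n) : lowPart n (M + N) = lowPart n M + lowPart n N := by
  ext i j
  simp only [lowPart_apply, Matrix.add_apply]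
  split_ifs <;> simp

lemma lowPart_eq_zero_iff {M : Mat n} : lowPart n M = 0 ↔ M.IsUpperTriangular := by
  refine ⟨fun h i j hij => ?_, fun h => ?_⟩
  · simpa [lowPart_apply, show j < i from hij] using congr_fun₂ h i j
  · ext i j
    rw [lowPart_apply, Matrix.zero_apply, ite_eq_right_iff]
    exact fun hij => h hij

lemma isUpperTriangular_sub_lowPart (M : Mat n) : (M - lowPart n M).IsUpperTriangular :=
  fun i j hij => by simp [lowPart_apply, show j < i from hij]

lemma Matrix.IsUpperTriangular.conj {b M : Mat n} (hb : b.IsUpperTriangular)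
    (hdet : IsUnit b.det) (hM : M.IsUpperTriangular) : (b * M * b⁻¹).IsUpperTriangular :=
  have := b.invertibleOfIsUnitDet hdet
  (hb.mul hM).mul (blockTriangular_inv_of_blockTriangular hb)

lemma lowPart_conj_lowPart {b : Mat n} (hb : b.IsUpperTriangular) (hdet : IsUnit b.det)
    (X : Mat n) : lowPart n (b * lowPart n X * b⁻¹) = lowPart n (b * X * b⁻¹) := by
  have hsplit : b * X * b⁻¹ = b * lowPart n X * b⁻¹ + b * (X - lowPart n X) * b⁻¹ := by
    rw [← Matrix.add_mul, ← Matrix.mul_add, add_sub_cancel]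
  rw [hsplit, lowPart_add,
    lowPart_eq_zero_iff.2 (hb.conj hdet (isUpperTriangular_sub_lowPart X)), add_zero]

lemma coad_mul {b₁ : Mat n} (hb₁ : b₁.IsUpperTriangular) (hdet : IsUnit b₁.det)
    (b₂ lam : Mat n) : coad n (b₁ * b₂) lam = coad n b₁ (coad n b₂ lam) := by
  rw [coad, coad, coad, lowPart_conj_lowPart hb₁ hdet, Matrix.mul_inv_rev]
  simp only [Matrix.mul_assoc]

lemma coad_diagonal_eq_self {lam : Mat n} (hlam : lowPart n lam = lam) {d : Fin (2 * n) → ℂ}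
    (hd : ∀ i, d i ≠ 0) (hconst : ∀ i j, lam i j ≠ 0 → d i = d j) :
    coad n (diagonal d) lam = lam := by
  have hinv : (diagonal d)⁻¹ = diagonal d⁻¹ :=
    inv_eq_right_inv (by simp [diagonal_mul_diagonal, hd, ← diagonal_one])
  have hconj : diagonal d * lam * diagonal d⁻¹ = lam := by
    ext i j
    rw [mul_diagonal, diagonal_mul, Pi.inv_apply]
    by_cases hij : lam i j = 0
    · simp [hij]
    · rw [hconst i j hij, mul_comm (d j), mul_inv_cancel_right₀ (hd j)]
  rw [coad, hinv, hconj, hlam]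

def IsPartialMonomial (M : Mat n) : Prop :=
  ∀ i j k l, M i j ≠ 0 → M k l ≠ 0 → (i = k ↔ j = l)

/-- Below the diagonal `b λ` and `λ b` agree, their difference `(b λ b⁻¹ - λ) b` being upper
triangular; at a nonzero entry `(i, j)` of `λ` these entries are `b i i * λ i j` and `λ i j * b j j`. -/
lemma diag_eq_of_coad_eq_self {b lam : Mat n} (hb : b.IsUpperTriangular) (hdet : IsUnit b.det)
    (hlam : lowPart n lam = lam) (hmono : IsPartialMonomial lam) (hc : coad n b lam = lam)
    {i j : Fin (2 * n)} (hij : lam i j ≠ 0) : b i i = b j j := by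
  have hji : j < i := by
    by_contra h
    exact hij (by rw [← hlam, lowPart_apply, if_neg h])
  have hY : (b * lam * b⁻¹ - lam).IsUpperTriangular := by
    refine lowPart_eq_zero_iff.1 (Matrix.ext fun p q => ?_)
    have hpq := congr_fun₂ hc p q
    simp only [coad, lowPart_apply] at hpq ⊢
    split_ifs at hpq ⊢ with hqp
    · rw [Matrix.sub_apply, hpq, ← hlam, lowPart_apply, if_pos hqp, sub_self, Matrix.zero_apply]
    · rfl
  have hcomm : b * lam = lam * b + (b * lam * b⁻¹ - lam) * b := by
    rw [Matrix.sub_mul, nonsing_inv_mul_cancel_right _ _ hdet, add_sub_cancel]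
  have hentry : (b * lam) i j = (lam * b) i j := by
    rw [hcomm, Matrix.add_apply, hY.mul hb hji, add_zero]
  have hleft : (b * lam) i j = b i i * lam i j := by
    refine Finset.sum_eq_single_of_mem i (Finset.mem_univ i) fun k _ hk => ?_
    by_contra hne
    exact hk ((hmono i j k j hij (right_ne_zero_of_mul hne)).2 rfl).symm
  have hright : (lam * b) i j = lam i j * b j j := by
    refine Finset.sum_eq_single_of_mem j (Finset.mem_univ j) fun k _ hk => ?_
    by_contra hne
    exact hk ((hmono i j i k hij (left_ne_zero_of_mul hne)).1 rfl).symm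
  exact mul_right_cancel₀ hij (by rw [← hleft, hentry, hright, mul_comm])

lemma antidiagJ_apply (i j : Fin (2 * n)) : antidiagJ n i j = if j = i.rev then 1 else 0 := by
  have hi := i.isLt
  simp only [antidiagJ, of_apply, Fin.ext_iff, Fin.val_rev]
  congr 1
  exact propext (by omega)

lemma antidiagJ_mul_apply (M : Mat n) (i j : Fin (2 * n)) :
    (antidiagJ n * M) i j = M i.rev j := by
  simp [Matrix.mul_apply, antidiagJ_apply]

lemma IsSO.mul {g h : Mat n} (hg : IsSO n g) (hh : IsSO n h) : IsSO n (g * h) := by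
  refine ⟨by rw [det_mul, hg.1, hh.1, one_mul], ?_⟩
  calc (g * h)ᵀ * antidiagJ n * (g * h) = hᵀ * (gᵀ * antidiagJ n * g) * h := by
        simp only [transpose_mul, Matrix.mul_assoc]
    _ = antidiagJ n := by rw [hg.2, hh.2]

lemma isSO_diagonal {d : Fin (2 * n) → ℂ} (hprod : ∏ i, d i = 1)
    (hrev : ∀ i, d i * d i.rev = 1) : IsSO n (diagonal d) := by
  refine ⟨by rw [det_diagonal, hprod], ?_⟩
  ext i j
  rw [diagonal_transpose, mul_diagonal, diagonal_mul, antidiagJ_apply]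
  split_ifs with hj
  · rw [mul_one, hj, hrev]
  · simp

lemma Bset.isUpperTriangular {b : Mat n} (hb : b ∈ Bset n) : b.IsUpperTriangular :=
  fun i j hij => hb.2 i j hij

lemma Bset.isUnit_det {b : Mat n} (hb : b ∈ Bset n) : IsUnit b.det := by
  rw [hb.1.1]
  exact isUnit_one

lemma Bset.prod_diag {b : Mat n} (hb : b ∈ Bset n) : ∏ i, b i i = 1 := by
  rw [← det_of_isUpperTriangular (Bset.isUpperTriangular hb), hb.1.1]

/-- The `(i, rev i)` entry of `bᵀ J b = J` is `∑ k, b k i * b (rev k) (rev i)`, and for upper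
triangular `b` only the term `k = i` survives. -/
lemma Bset.diag_mul_diag_rev {b : Mat n} (hb : b ∈ Bset n) (i : Fin (2 * n)) :
    b i i * b i.rev i.rev = 1 := by
  have hJ := congr_fun₂ hb.1.2 i i.rev
  rw [Matrix.mul_assoc, Matrix.mul_apply, antidiagJ_apply, if_pos rfl] at hJ
  rw [← hJ, Finset.sum_eq_single_of_mem i (Finset.mem_univ i) fun k _ hk => ?_]
  · rw [transpose_apply, antidiagJ_mul_apply]
  rw [transpose_apply, antidiagJ_mul_apply]
  rcases lt_or_gt_of_ne hk with hki | hik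
  · rw [show b k.rev i.rev = 0 from hb.2 _ _ (Fin.rev_lt_rev.2 hki), mul_zero]
  · rw [show b k i = 0 from hb.2 _ _ hik, zero_mul]

lemma Bset.diag_ne_zero {b : Mat n} (hb : b ∈ Bset n) (i : Fin (2 * n)) : b i i ≠ 0 :=
  left_ne_zero_of_mul_eq_one (Bset.diag_mul_diag_rev hb i)

lemma Tset_subset_Bset : Tset n ⊆ Bset n :=
  fun _ ht => ⟨ht.1, fun i j hij => ht.2 i j (Fin.ne_of_gt hij)⟩

lemma Tset.eq_diagonal {t : Mat n} (ht : t ∈ Tset n) : t = diagonal fun i => t i i := by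
  ext i j
  by_cases hij : i = j
  · simp [hij]
  · rw [ht.2 i j hij, diagonal_apply_ne _ hij]

lemma mul_mem_Bset {u t : Mat n} (hu : u ∈ Uset n) (ht : t ∈ Tset n) : u * t ∈ Bset n :=
  ⟨hu.1.1.mul ht.1,
    ((Bset.isUpperTriangular hu.1).mul (Bset.isUpperTriangular (Tset_subset_Bset ht)) :)⟩

def torusPart (n : ℕ) (b : Mat n) : Mat n := diagonal fun i => b i i

noncomputable def unipotentPart (n : ℕ) (b : Mat n) : Mat n := b * diagonal fun i => (b i i)⁻¹

lemma torusPart_mem_Tset {b : Mat n} (hb : b ∈ Bset n) : torusPart n b ∈ Tset n :=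
  ⟨isSO_diagonal (Bset.prod_diag hb) (Bset.diag_mul_diag_rev hb),
    fun _ _ hij => diagonal_apply_ne _ hij⟩

lemma unipotentPart_mem_Uset {b : Mat n} (hb : b ∈ Bset n) : unipotentPart n b ∈ Uset n := by
  have hinv : IsSO n (diagonal fun i => (b i i)⁻¹) :=
    isSO_diagonal (by rw [Finset.prod_inv_distrib, Bset.prod_diag hb, inv_one])
      (fun i => by rw [← mul_inv, Bset.diag_mul_diag_rev hb, inv_one])
  refine ⟨⟨hb.1.mul hinv, ?_⟩, fun i => ?_⟩
  · exact ((Bset.isUpperTriangular hb).mul (blockTriangular_diagonal _) :)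
  · rw [unipotentPart, mul_diagonal, mul_inv_cancel₀ (Bset.diag_ne_zero hb i)]

lemma diagonal_inv_mul_diagonal {d : Fin (2 * n) → ℂ} (hd : ∀ i, d i ≠ 0) :
    (diagonal fun i => (d i)⁻¹) * diagonal d = 1 := by
  rw [diagonal_mul_diagonal, ← diagonal_one]
  exact congrArg diagonal (funext fun i => inv_mul_cancel₀ (hd i))

lemma unipotentPart_mul_torusPart {b : Mat n} (hb : b ∈ Bset n) :
    unipotentPart n b * torusPart n b = b := by
  rw [unipotentPart, torusPart, Matrix.mul_assoc,
    diagonal_inv_mul_diagonal (Bset.diag_ne_zero hb), Matrix.mul_one]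

lemma diag_mul_of_mem_Uset {u t : Mat n} (hu : u ∈ Uset n) (ht : t ∈ Tset n) (i : Fin (2 * n)) :
    (u * t) i i = t i i := by
  rw [Tset.eq_diagonal ht, mul_diagonal, hu.2, one_mul, diagonal_apply_eq]

lemma torusPart_mul {u t : Mat n} (hu : u ∈ Uset n) (ht : t ∈ Tset n) :
    torusPart n (u * t) = t := by
  simp only [torusPart, diag_mul_of_mem_Uset hu ht]
  exact (Tset.eq_diagonal ht).symm

lemma unipotentPart_mul {u t : Mat n} (hu : u ∈ Uset n) (ht : t ∈ Tset n) :
    unipotentPart n (u * t) = u := by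
  have hd := Bset.diag_ne_zero (Tset_subset_Bset ht)
  simp only [unipotentPart, diag_mul_of_mem_Uset hu ht]
  have hcancel : t * diagonal (fun i => (t i i)⁻¹) = 1 := by
    conv_lhs => arg 1; rw [Tset.eq_diagonal ht]
    simp [diagonal_mul_diagonal, hd]
  rw [Matrix.mul_assoc, hcancel, Matrix.mul_one]

lemma coad_mul_eq_self {u t lam : Mat n} (hu : u ∈ Bset n) (hcu : coad n u lam = lam)
    (hct : coad n t lam = lam) : coad n (u * t) lam = lam := by
  rw [coad_mul (Bset.isUpperTriangular hu) (Bset.isUnit_det hu), hct, hcu]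

lemma coad_torusPart_eq_self {b lam : Mat n} (hb : b ∈ Bset n) (hlam : lowPart n lam = lam)
    (hmono : IsPartialMonomial lam) (hc : coad n b lam = lam) :
    coad n (torusPart n b) lam = lam :=
  coad_diagonal_eq_self hlam (Bset.diag_ne_zero hb) fun _ _ hij =>
    diag_eq_of_coad_eq_self (Bset.isUpperTriangular hb) (Bset.isUnit_det hb) hlam hmono hc hij

lemma coad_unipotentPart_eq_self {b lam : Mat n} (hb : b ∈ Bset n) (hlam : lowPart n lam = lam)
    (hmono : IsPartialMonomial lam) (hc : coad n b lam = lam) :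
    coad n (unipotentPart n b) lam = lam := by
  have hu := (unipotentPart_mem_Uset hb).1
  calc coad n (unipotentPart n b) lam
      = coad n (unipotentPart n b) (coad n (torusPart n b) lam) := by
        rw [coad_torusPart_eq_self hb hlam hmono hc]
    _ = lam := by
        rw [← coad_mul (Bset.isUpperTriangular hu) (Bset.isUnit_det hu),
          unipotentPart_mul_torusPart hb, hc]

/-- The label `1, …, n, -n, …, -1` of a row or column of a `2n × 2n` matrix. -/
def signedIndex (n : ℕ) (p : Fin (2 * n)) : ℤ := if (p : ℕ) < n then p + 1 else p - 2 * n

lemma signedIndex_injective : Function.Injective (signedIndex n) := by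
  intro p q h
  simp only [signedIndex] at h
  ext
  split_ifs at h <;> omega

lemma signedIndex_of_val_eq {p : Fin (2 * n)} {a : ℕ} (hp : (p : ℕ) = a) (ha : a < n) :
    signedIndex n p = a + 1 := by
  simp only [signedIndex, hp, if_pos ha]

lemma signedIndex_of_val_eq_rev {p : Fin (2 * n)} {a : ℕ} (hp : (p : ℕ) = 2 * n - 1 - a)
    (ha : a < n) : signedIndex n p = -(a + 1) := by
  simp only [signedIndex, hp, if_neg (show ¬ 2 * n - 1 - a < n by omega)]
  omega

lemma eStar_apply_ne_zero {a b : Fin n} {β : Bool} {p q : Fin (2 * n)}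
    (h : eStar n (a, b, β) p q ≠ 0) :
    β = false ∧ ((p : ℕ) = b ∧ (q : ℕ) = a ∨ (p : ℕ) = 2 * n - 1 - a ∧ (q : ℕ) = 2 * n - 1 - b) ∨
    β = true ∧ ((p : ℕ) = 2 * n - 1 - b ∧ (q : ℕ) = a ∨ (p : ℕ) = 2 * n - 1 - a ∧ (q : ℕ) = b) := by
  cases β <;> simp only [eStar, Bool.false_eq_true, if_true, if_false, Matrix.sub_apply, single,
    of_apply, Fin.ext_iff, true_and, false_and, or_false] at h ⊢ <;>
    split_ifs at h <;> first | omega | simp at h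

lemma mem_suppFinset {a b : Fin n} {β : Bool} {w : Equiv.Perm ℤ} :
    (a, b, β) ∈ suppFinset n w ↔ a < b ∧
      (β = false ∧ w ((a : ℕ) + 1) = (b : ℕ) + 1 ∨ β = true ∧ w ((a : ℕ) + 1) = -((b : ℕ) + 1)) := by
  simp [suppFinset]

lemma lowPart_fw (w : Equiv.Perm ℤ) : lowPart n (fw n w) = fw n w := by
  ext p q
  rw [lowPart_apply, ite_eq_left_iff, fw, Matrix.sum_apply, eq_comm]
  refine fun hpq => Finset.sum_eq_zero fun ⟨a, b, β⟩ hr => ?_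
  by_contra h
  have hab : (a : ℕ) < b := (mem_suppFinset.1 hr).1
  have hb := b.isLt
  rcases eStar_apply_ne_zero h with ⟨-, ⟨hp, hq⟩ | ⟨hp, hq⟩⟩ | ⟨-, ⟨hp, hq⟩ | ⟨hp, hq⟩⟩ <;>
    exact hpq (by rw [Fin.lt_def]; omega)

lemma signedIndex_eq_of_fw_ne_zero {w : Equiv.Perm ℤ} (hneg : ∀ i, w (-i) = -(w i))
    (hinv : Function.Involutive w) {p q : Fin (2 * n)} (h : fw n w p q ≠ 0) :
    signedIndex n p = w (signedIndex n q) := by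
  rw [fw, Matrix.sum_apply] at h
  obtain ⟨⟨a, b, β⟩, hr, h⟩ := Finset.exists_ne_zero_of_sum_ne_zero h
  obtain ⟨-, ⟨rfl, hw⟩ | ⟨rfl, hw⟩⟩ := mem_suppFinset.1 hr <;>
    rcases eStar_apply_ne_zero h with ⟨hβ, ⟨hp, hq⟩ | ⟨hp, hq⟩⟩ | ⟨hβ, ⟨hp, hq⟩ | ⟨hp, hq⟩⟩ <;>
    simp only [Bool.true_eq_false, Bool.false_eq_true] at hβ
  · rw [signedIndex_of_val_eq hp b.isLt, signedIndex_of_val_eq hq a.isLt, hw]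
  · rw [signedIndex_of_val_eq_rev hp a.isLt, signedIndex_of_val_eq_rev hq b.isLt, hneg, ← hw,
      hinv]
  · rw [signedIndex_of_val_eq_rev hp b.isLt, signedIndex_of_val_eq hq a.isLt, hw]
  · rw [signedIndex_of_val_eq_rev hp a.isLt, signedIndex_of_val_eq hq b.isLt, ← neg_neg (w _),
      ← hneg, ← hw, hinv]

lemma IsBasicInvolution.involutive {w : Equiv.Perm ℤ} (hw : IsBasicInvolution n w) :
    Function.Involutive w := fun x => by
  simpa only [Perm.mul_apply, Perm.one_apply] using DFunLike.congr_fun hw.2.1 x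

lemma isPartialMonomial_fw {w : Equiv.Perm ℤ} (hneg : ∀ i, w (-i) = -(w i))
    (hinv : Function.Involutive w) : IsPartialMonomial (fw n w) := by
  intro i j k l hij hkl
  rw [← signedIndex_injective.eq_iff, signedIndex_eq_of_fw_ne_zero hneg hinv hij,
    signedIndex_eq_of_fw_ne_zero hneg hinv hkl, w.injective.eq_iff, signedIndex_injective.eq_iff]

end

theorem statement8_general (n : ℕ) (w : Equiv.Perm ℤ)
    (hw : IsBasicInvolution n w) :
    Set.BijOn (fun p : Mat n × Mat n => p.1 * p.2)
      ({u ∈ Uset n | coad n u (fw n w) = fw n w} ×ˢ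
        {t ∈ Tset n | coad n t (fw n w) = fw n w})
      {b ∈ Bset n | coad n b (fw n w) = fw n w} := by
  have hlow : lowPart n (fw n w) = fw n w := lowPart_fw w
  have hmono : IsPartialMonomial (fw n w) := isPartialMonomial_fw hw.1.1 hw.involutive
  refine Set.InvOn.bijOn (f' := fun b => (unipotentPart n b, torusPart n b)) ⟨?_, ?_⟩ ?_ ?_
  · rintro ⟨u, t⟩ ⟨⟨hu, -⟩, ht, -⟩
    exact Prod.ext (unipotentPart_mul hu ht) (torusPart_mul hu ht)
  · rintro b ⟨hb, -⟩
    exact unipotentPart_mul_torusPart hb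
  · rintro ⟨u, t⟩ ⟨⟨hu, hcu⟩, ht, hct⟩
    exact ⟨mul_mem_Bset hu ht, coad_mul_eq_self hu.1 hcu hct⟩
  · rintro b ⟨hb, hc⟩
    exact ⟨⟨unipotentPart_mem_Uset hb, coad_unipotentPart_eq_self hb hlow hmono hc⟩,
      torusPart_mem_Tset hb, coad_torusPart_eq_self hb hlow hmono hc⟩

/-- Let `w` be a basic involution in the Weyl group of type `Dₙ`,
`n ≥ 4`, and let `Z_B`, `Z_U`, `Z_T` be the stabilizers of `f_w` under the coadjoint
action in `B`, `U`, `T` respectively. Then the multiplication map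
`Z_U × Z_T → Z_B`, `(u, h) ↦ u h`, is well defined and bijective. -/
theorem statement8 (n : ℕ) (hn : 4 ≤ n) (w : Equiv.Perm ℤ)
    (hw : IsBasicInvolution n w) :
    Set.BijOn (fun p : Mat n × Mat n => p.1 * p.2)
      ({u ∈ Uset n | coad n u (fw n w) = fw n w} ×ˢ
        {t ∈ Tset n | coad n t (fw n w) = fw n w})
      {b ∈ Bset n | coad n b (fw n w) = fw n w} :=
  statement8_general n w hw
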